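/- Subtyping coercion: if Ψ ⊢ A ≤ B then there exists an annotation-free term f such that Ψ ⊢ f : A→B in the type assignment system and f is βη-equal to the identity function λx.x. -/

import Mathlib

set_option autoImplicit true

namespace DK

/-- Types: 1 | α | A → B | ∀α. A  (type variables named by naturals) -/
inductive Ty : Type where
  | unit : Ty
  | var : ℕ → Ty
  | arr : Ty → Ty → Ty
  | all : ℕ → Ty → Ty

/-- Monotypes: types containing no quantifiers. -/
def Ty.mono : Ty → Prop
  | .unit => True
  | .var _ => True
  | .arr A B => A.mono ∧ B.mono
  | .all _ _ => False

/-- Free type variables. -/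
def Ty.fv : Ty → Finset ℕ
  | .unit => ∅
  | .var a => {a}
  | .arr A B => A.fv ∪ B.fv
  | .all a A => A.fv.erase a

/-- `A.subst τ a` is the substitution [τ/a]A. -/
def Ty.subst : Ty → Ty → ℕ → Ty
  | .unit, _, _ => .unit
  | .var b, τ, a => if b = a then τ else .var b
  | .arr A B, τ, a => .arr (A.subst τ a) (B.subst τ a)
  | .all b A, τ, a => .all b (if b = a then A else A.subst τ a)

/-- Declarative context entries: type variables α and term variable typings x : A. -/
inductive Decl : Type where
  | tvar : ℕ → Decl
  | var : ℕ → Ty → Decl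

/-- Declarative contexts; the most recent declaration is the head
    (so "Ψ, α" is `Decl.tvar α :: Ψ`). -/
abbrev Ctx := List Decl

/-- Well-formedness Ψ ⊢ A : every free type variable of A is declared in Ψ. -/
def WfTy (Ψ : Ctx) (A : Ty) : Prop :=
  ∀ a ∈ A.fv, Decl.tvar a ∈ Ψ

/-- Declarative subtyping Ψ ⊢ A ≤ B. -/
inductive Sub : Ctx → Ty → Ty → Prop where
  | var : Decl.tvar a ∈ Ψ → Sub Ψ (.var a) (.var a)
  | unit : Sub Ψ .unit .unit
  | arr : Sub Ψ B₁ A₁ → Sub Ψ A₂ B₂ → Sub Ψ (.arr A₁ A₂) (.arr B₁ B₂)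
  | allL : (τ : Ty) → τ.mono → WfTy Ψ τ → Sub Ψ (A.subst τ a) B → Sub Ψ (.all a A) B
  | allR : Sub (Decl.tvar b :: Ψ) A B → Sub Ψ A (.all b B)

end DK

namespace DK

/-- Terms: x | () | λx.e | e₁ e₂ | (e : A). -/
inductive Tm : Type where
  | var : ℕ → Tm
  | unit : Tm
  | lam : ℕ → Tm → Tm
  | app : Tm → Tm → Tm
  | anno : Tm → Ty → Tm

/-- Erasure |e| of all type annotations. -/
def Tm.erase : Tm → Tm
  | .var x => .var x
  | .unit => .unit
  | .lam x e => .lam x e.erase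
  | .app e₁ e₂ => .app e₁.erase e₂.erase
  | .anno e _ => e.erase

/-- A term is annotation-free if it contains no type annotations. -/
def Tm.annFree : Tm → Prop
  | .var _ => True
  | .unit => True
  | .lam _ e => e.annFree
  | .app e₁ e₂ => e₁.annFree ∧ e₂.annFree
  | .anno _ _ => False

/-- Free term variables. -/
def Tm.fv : Tm → Finset ℕ
  | .var x => {x}
  | .unit => ∅
  | .lam x e => e.fv.erase x
  | .app e₁ e₂ => e₁.fv ∪ e₂.fv
  | .anno e _ => e.fv

/-- `e'.subst e x` is the term substitution [e/x]e'. -/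
def Tm.subst : Tm → Tm → ℕ → Tm
  | .var y, v, x => if y = x then v else .var y
  | .unit, _, _ => .unit
  | .lam y e, v, x => .lam y (if y = x then e else e.subst v x)
  | .app e₁ e₂, v, x => .app (e₁.subst v x) (e₂.subst v x)
  | .anno e A, v, x => .anno (e.subst v x) A

/-- Type assignment Ψ ⊢ e : A (for annotation-free terms). -/
inductive Assign : Ctx → Tm → Ty → Prop where
  | var : Decl.var x A ∈ Ψ → Assign Ψ (.var x) A
  | unit : Assign Ψ .unit .unit
  | lam : Assign (Decl.var x A :: Ψ) e B → Assign Ψ (.lam x e) (.arr A B)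
  | app : Assign Ψ e₁ (.arr A B) → Assign Ψ e₂ A → Assign Ψ (.app e₁ e₂) B
  | allI : Assign (Decl.tvar a :: Ψ) e A → Assign Ψ e (.all a A)
  | allE : Assign Ψ e (.all a A) → (τ : Ty) → τ.mono → WfTy Ψ τ →
      Assign Ψ e (A.subst τ a)

mutual
/-- Declarative bidirectional checking Ψ ⊢ e ⇐ A. -/
inductive Chk : Ctx → Tm → Ty → Prop where
  | sub : Syn Ψ e A → Sub Ψ A B → Chk Ψ e B
  | unitI : Chk Ψ .unit .unit
  | allI : Chk (Decl.tvar a :: Ψ) e A → Chk Ψ e (.all a A)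
  | arrI : Chk (Decl.var x A :: Ψ) e B → Chk Ψ (.lam x e) (.arr A B)

/-- Declarative bidirectional synthesis Ψ ⊢ e ⇒ A. -/
inductive Syn : Ctx → Tm → Ty → Prop where
  | var : Decl.var x A ∈ Ψ → Syn Ψ (.var x) A
  | anno : WfTy Ψ A → Chk Ψ e A → Syn Ψ (.anno e A) A
  | unitI : Syn Ψ .unit .unit
  | arrI : Ty.mono σ → Ty.mono τ → WfTy Ψ (.arr σ τ) →
      Chk (Decl.var x σ :: Ψ) e τ → Syn Ψ (.lam x e) (.arr σ τ)
  | arrE : Syn Ψ e₁ A → App Ψ e₂ A C → Syn Ψ (.app e₁ e₂) C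

/-- Declarative application judgment Ψ ⊢ e • A ⇒⇒ C. -/
inductive App : Ctx → Tm → Ty → Ty → Prop where
  | allApp : (τ : Ty) → τ.mono → WfTy Ψ τ → App Ψ e (A.subst τ a) C →
      App Ψ e (.all a A) C
  | arrApp : Chk Ψ e A → App Ψ e (.arr A C) C
end

/-- βη-equivalence of terms: the least congruence containing β- and η-conversion. -/
inductive BetaEta : Tm → Tm → Prop where
  | beta : BetaEta (.app (.lam x e) e') (e.subst e' x)
  | eta : x ∉ Tm.fv e → BetaEta (.lam x (.app e (.var x))) e
  | refl : BetaEta e e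
  | symm : BetaEta e₁ e₂ → BetaEta e₂ e₁
  | trans : BetaEta e₁ e₂ → BetaEta e₂ e₃ → BetaEta e₁ e₃
  | lam : BetaEta e e' → BetaEta (.lam x e) (.lam x e')
  | app : BetaEta e₁ e₁' → BetaEta e₂ e₂' → BetaEta (.app e₁ e₂) (.app e₁' e₂')
  | anno : BetaEta e e' → BetaEta (.anno e A) (.anno e' A)

end DK

namespace DK

/-!
Induct on the subtyping derivation. The reflexive rules are witnessed by `λx.x`; an arrow
`A₁ → A₂ ≤ B₁ → B₂` by `λg.λy. f₂ (g (f₁ y))`, which collapses to `λg. g` by β (each `fᵢ` acts as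
the identity) and then η; and each quantifier rule by the η-expansion `λx. f x` of the coercion
for its premise, typed by instantiating (∀E) or generalising (∀I) at `x`.
-/

theorem Assign.weaken {Ψ Ψ' : Ctx} {e : Tm} {A : Ty} (h : Assign Ψ e A) (hs : Ψ ⊆ Ψ') :
    Assign Ψ' e A := by
  induction h generalizing Ψ' with
  | var hm => exact .var (hs hm)
  | unit => exact .unit
  | lam _ ih => exact .lam (ih (List.cons_subset_cons _ hs))
  | app _ _ ih₁ ih₂ => exact .app (ih₁ hs) (ih₂ hs)
  | allI _ ih => exact .allI (ih (List.cons_subset_cons _ hs))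
  | allE _ τ hm hw ih => exact .allE (ih hs) τ hm fun a ha => hs (hw a ha)

theorem Assign.cons {Ψ : Ctx} {e : Tm} {A : Ty} (d : Decl) (h : Assign Ψ e A) :
    Assign (d :: Ψ) e A :=
  h.weaken (List.subset_cons_self d Ψ)

theorem BetaEta.app_of_id {f t : Tm} (h : BetaEta f (.lam 0 (.var 0))) :
    BetaEta (.app f t) t :=
  (BetaEta.app h .refl).trans (by simpa only [Tm.subst, if_pos rfl] using .beta)

structure IsCoercion (Ψ : Ctx) (f : Tm) (A B : Ty) : Prop where
  annFree : f.annFree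
  assign : Assign Ψ f (.arr A B)
  betaEta_id : BetaEta f (.lam 0 (.var 0))

namespace IsCoercion

variable {Ψ : Ctx}

theorem id (A : Ty) : IsCoercion Ψ (.lam 0 (.var 0)) A A :=
  ⟨trivial, .lam (.var List.mem_cons_self), .refl⟩

/-- The bound variables `0` and `1` need not be fresh for `fᵢ`: `Assign` looks variables up by
list membership, and `fᵢ t =βη t` holds for every term `t`. -/
theorem arr {f₁ f₂ : Tm} {A₁ A₂ B₁ B₂ : Ty}
    (h₁ : IsCoercion Ψ f₁ B₁ A₁) (h₂ : IsCoercion Ψ f₂ A₂ B₂) :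
    IsCoercion Ψ (.lam 0 (.lam 1 (.app f₂ (.app (.var 0) (.app f₁ (.var 1))))))
      (.arr A₁ A₂) (.arr B₁ B₂) where
  annFree := ⟨h₂.annFree, trivial, h₁.annFree, trivial⟩
  assign := .lam <| .lam <| .app ((h₂.assign.cons _).cons _) <|
    .app (.var (List.mem_cons_of_mem _ List.mem_cons_self))
      (.app ((h₁.assign.cons _).cons _) (.var List.mem_cons_self))
  betaEta_id := by
    have hbody : BetaEta (.app f₂ (.app (.var 0) (.app f₁ (.var 1)))) (.app (.var 0) (.var 1)) :=
      h₂.betaEta_id.app_of_id.trans (.app .refl h₁.betaEta_id.app_of_id)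
    have heta : BetaEta (.lam 1 (.app (.var 0) (.var 1))) (.var 0) :=
      .eta (by simp [Tm.fv])
    exact .lam (hbody.lam.trans heta)

theorem etaExpand {Ψ' : Ctx} {f : Tm} {A B A' B' : Ty} {x : ℕ} (h : IsCoercion Ψ' f A' B')
    (hx : x ∉ f.fv) (hassign : Assign Ψ (.lam x (.app f (.var x))) (.arr A B)) :
    IsCoercion Ψ (.lam x (.app f (.var x))) A B :=
  ⟨⟨h.annFree, trivial⟩, hassign, (BetaEta.eta hx).trans h.betaEta_id⟩

theorem exists_all_left {f : Tm} {A B τ : Ty} {a : ℕ} (hτ : τ.mono) (hw : WfTy Ψ τ)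
    (h : IsCoercion Ψ f (A.subst τ a) B) : ∃ g, IsCoercion Ψ g (.all a A) B := by
  obtain ⟨x, hx⟩ := Infinite.exists_notMem_finset f.fv
  exact ⟨_, h.etaExpand hx <| .lam <| .app (h.assign.cons _) <|
    .allE (.var List.mem_cons_self) τ hτ fun b hb => List.mem_cons_of_mem _ (hw b hb)⟩

theorem exists_all_right {f : Tm} {A B : Ty} {b : ℕ} (h : IsCoercion (.tvar b :: Ψ) f A B) :
    ∃ g, IsCoercion Ψ g A (.all b B) := by
  obtain ⟨x, hx⟩ := Infinite.exists_notMem_finset f.fv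
  exact ⟨_, h.etaExpand hx <| .lam <| .allI <|
    .app (h.assign.weaken (List.cons_subset_cons _ (List.subset_cons_self _ _)))
      (.var (List.mem_cons_of_mem _ List.mem_cons_self))⟩

end IsCoercion

theorem Sub.exists_isCoercion {Ψ : Ctx} {A B : Ty} (h : Sub Ψ A B) : ∃ f, IsCoercion Ψ f A B := by
  induction h with
  | var _ => exact ⟨_, .id _⟩
  | unit => exact ⟨_, .id _⟩
  | arr _ _ ih₁ ih₂ =>
    obtain ⟨f₁, h₁⟩ := ih₁
    obtain ⟨f₂, h₂⟩ := ih₂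
    exact ⟨_, h₁.arr h₂⟩
  | allL τ hτ hw _ ih =>
    obtain ⟨f, hf⟩ := ih
    exact hf.exists_all_left hτ hw
  | allR _ ih =>
    obtain ⟨f, hf⟩ := ih
    exact hf.exists_all_right

/-- Subtyping coercion: if Ψ ⊢ A ≤ B then there is an annotation-free term f,
    βη-equal to the identity, such that Ψ ⊢ f : A → B. -/
theorem subtyping_coercion (Ψ : Ctx) (A B : Ty) (h : Sub Ψ A B) :
    ∃ f : Tm, f.annFree ∧ Assign Ψ f (.arr A B) ∧ BetaEta f (.lam 0 (.var 0)) := by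
  obtain ⟨f, hf⟩ := h.exists_isCoercion
  exact ⟨f, hf.annFree, hf.assign, hf.betaEta_id⟩

end DK
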